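/- Let X, H be Hermitian involutions on a finite-dimensional Hilbert space with {X, H} = 0, and let P₀ be an orthogonal projector with [H, P₀] = 0, P₀XP₀ = 0, P₀XHP₀ = 0. With V(φ) = e^{i(θφ/2π)H}e^{iφX}, for all φ and δ: P₀ V(φ)† V(φ−δ) P₀ = [cos((θ/2π)δ)cos(δ) I − i sin((θ/2π)δ)cos(2φ−δ) H] P₀. -/

import Mathlib

/-!
Since `X² = H² = 1`, `exp (i t X) = cos t + i sin t X`, and likewise for `H`. Taking adjoints and
merging the two `H`-factors gives `V(φ)ᴴ V(φ - δ) = e^{-iφX} e^{-i(θδ/2π)H} e^{i(φ-δ)X}`.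
Compressing a product `e^{iαX} e^{iβH} e^{iγX}` by `P₀` kills every term with a single `X`
(`P₀XP₀ = P₀XHP₀ = P₀HXP₀ = 0`), while `XX = 1` and `XHX = -H` turn the remaining terms into
multiples of `P₀` and `HP₀`; by the addition formulas what survives is
`cos (α + γ) cos β P₀ + i sin β cos (α - γ) HP₀`.
-/

open Matrix

theorem compress_affine_mul_affine_mul_affine {R A : Type*} [CommRing R] [Ring A] [Algebra R A]
    {P X H : A} (hP : P * P = P) (hX : X * X = 1) (hXH : X * H = -(H * X))
    (hHP : H * P = P * H) (hPXP : P * X * P = 0) (hPXHP : P * (X * H) * P = 0)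
    (a b c d e f : R) :
    P * ((a • 1 + b • X) * (c • 1 + d • H) * (e • 1 + f • X)) * P =
      ((a * e + b * f) * c) • P + ((a * e - b * f) * d) • (H * P) := by
  have hPHP : P * H * P = H * P := by rw [← hHP, mul_assoc, hP]
  have hHX : H * X = -(X * H) := by rw [hXH, neg_neg]
  have hPHXP : P * (H * X) * P = 0 := by rw [hHX, mul_neg, neg_mul, hPXHP, neg_zero]
  have hPXHXP : P * (X * H * X) * P = -(H * P) := by
    rw [mul_assoc X, hHX, mul_neg, ← mul_assoc, hX, one_mul, mul_neg, neg_mul, hPHP]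
  have hPXXP : P * (X * X) * P = P := by rw [hX, mul_one, hP]
  have expand : (a • 1 + b • X) * (c • 1 + d • H) * (e • 1 + f • X) =
      (a * c * e) • 1 + (a * c * f) • X + (a * d * e) • H + (a * d * f) • (H * X) +
        (b * c * e) • X + (b * c * f) • (X * X) + (b * d * e) • (X * H) +
          (b * d * f) • (X * H * X) := by
    simp only [add_mul, mul_add, smul_mul_smul, one_mul, mul_one, mul_assoc]
    module
  rw [expand]
  simp only [mul_add, add_mul, mul_smul_comm, smul_mul_assoc, mul_one, hP, hPXP, hPHP, hPHXP,
    hPXHXP, hPXXP, hPXHP]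
  module

section TopologicalAlgebra

variable {A : Type*} [Ring A] [Algebra ℂ A] [TopologicalSpace A] [IsTopologicalRing A]
  [ContinuousSMul ℂ A] [T2Space A]

theorem NormedSpace.exp_smul_of_mul_self_eq_one {x : A} (hx : x * x = 1) (z : ℂ) :
    NormedSpace.exp (z • x) = Complex.cosh z • (1 : A) + Complex.sinh z • x := by
  have hx_even : ∀ n : ℕ, x ^ (2 * n) = 1 := fun n => by rw [pow_mul, sq, hx, one_pow]
  rw [NormedSpace.exp_eq_tsum ℂ]
  refine HasSum.tsum_eq (HasSum.even_add_odd ?_ ?_)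
  · convert (Complex.hasSum_cosh z).smul_const (1 : A) using 2 with n
    rw [smul_pow, hx_even, smul_smul, div_eq_inv_mul]
  · convert (Complex.hasSum_sinh z).smul_const x using 2 with n
    rw [smul_pow, pow_succ x, hx_even, one_mul, smul_smul, div_eq_inv_mul]

theorem NormedSpace.exp_I_mul_smul_of_mul_self_eq_one {x : A} (hx : x * x = 1) (w : ℂ) :
    NormedSpace.exp ((Complex.I * w) • x) =
      Complex.cos w • (1 : A) + (Complex.I * Complex.sin w) • x := by
  rw [NormedSpace.exp_smul_of_mul_self_eq_one hx, mul_comm, Complex.cosh_mul_I,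
    Complex.sinh_mul_I, mul_comm]

theorem compress_exp_mul_exp_mul_exp {P X H : A} (hP : P * P = P) (hX : X * X = 1)
    (hH : H * H = 1) (hXH : X * H = -(H * X)) (hHP : H * P = P * H) (hPXP : P * X * P = 0)
    (hPXHP : P * (X * H) * P = 0) (α β γ : ℂ) :
    P * (NormedSpace.exp ((Complex.I * α) • X) * NormedSpace.exp ((Complex.I * β) • H) *
        NormedSpace.exp ((Complex.I * γ) • X)) * P =
      (Complex.cos (α + γ) * Complex.cos β) • P +
        (Complex.I * Complex.sin β * Complex.cos (α - γ)) • (H * P) := by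
  simp only [NormedSpace.exp_I_mul_smul_of_mul_self_eq_one hX,
    NormedSpace.exp_I_mul_smul_of_mul_self_eq_one hH]
  rw [compress_affine_mul_affine_mul_affine hP hX hXH hHP hPXP hPXHP, Complex.cos_add,
    Complex.cos_sub]
  congr 2
  · linear_combination Complex.sin α * Complex.sin γ * Complex.cos β * Complex.I_mul_I
  · linear_combination -Complex.I * Complex.sin α * Complex.sin γ * Complex.sin β * Complex.I_mul_I

end TopologicalAlgebra

section MatrixExp

variable {n : Type*} [Fintype n] [DecidableEq n]

theorem Matrix.IsHermitian.conjTranspose_exp_smul {M : Matrix n n ℂ} (hM : M.IsHermitian)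
    (z : ℂ) : (NormedSpace.exp (z • M))ᴴ = NormedSpace.exp (star z • M) := by
  rw [← Matrix.exp_conjTranspose, conjTranspose_smul, hM.eq]

theorem Matrix.exp_smul_mul_exp_smul (M : Matrix n n ℂ) (s t : ℂ) :
    NormedSpace.exp (s • M) * NormedSpace.exp (t • M) = NormedSpace.exp ((s + t) • M) := by
  rw [← Matrix.exp_add_of_commute _ _ ((Commute.refl M).smul_left s |>.smul_right t), add_smul]

end MatrixExp

theorem sandwiched_rotation_code_block_general {N : ℕ} (θ : ℝ)
    (P₀ X H : Matrix (Fin N) (Fin N) ℂ)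
    (hP_idem : P₀ * P₀ = P₀)
    (hX_herm : Xᴴ = X) (hH_herm : Hᴴ = H)
    (hX2 : X * X = 1) (hH2 : H * H = 1)
    (hXH : X * H = -(H * X))
    (hHP : H * P₀ = P₀ * H)
    (hPXP : P₀ * X * P₀ = 0) (hPXHP : P₀ * (X * H) * P₀ = 0)
    (V : ℝ → Matrix (Fin N) (Fin N) ℂ)
    (hVdef : ∀ φ, V φ =
      NormedSpace.exp ((Complex.I * (θ * φ / (2 * Real.pi))) • H) *
        NormedSpace.exp ((Complex.I * φ) • X)) :
    ∀ φ δ : ℝ, P₀ * (V φ)ᴴ * V (φ - δ) * P₀ =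
      ((Real.cos (θ / (2 * Real.pi) * δ) * Real.cos δ : ℝ) : ℂ) • P₀ -
        (Complex.I * ((Real.sin (θ / (2 * Real.pi) * δ) *
          Real.cos (2 * φ - δ) : ℝ) : ℂ)) • (H * P₀) := by
  intro φ δ
  have hprod : (V φ)ᴴ * V (φ - δ) =
      NormedSpace.exp ((Complex.I * -φ) • X) *
        NormedSpace.exp ((Complex.I * -(θ / (2 * Real.pi) * δ)) • H) *
          NormedSpace.exp ((Complex.I * ↑(φ - δ)) • X) := by
    rw [hVdef, hVdef, conjTranspose_mul, IsHermitian.conjTranspose_exp_smul hX_herm,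
      IsHermitian.conjTranspose_exp_smul hH_herm, mul_assoc,
      ← mul_assoc (NormedSpace.exp (star _ • H)), exp_smul_mul_exp_smul, ← mul_assoc]
    congr 4 <;>
      simp only [star_mul', RCLike.star_def, Complex.conj_I, star_div₀, Complex.conj_ofReal,
        star_ofNat, Complex.ofReal_sub] <;>
      ring
  rw [mul_assoc P₀, hprod, compress_exp_mul_exp_mul_exp hP_idem hX2 hH2 hXH hHP hPXP hPXHP]
  push_cast
  rw [show -(φ : ℂ) + (φ - δ) = -δ by ring, show -(φ : ℂ) - (φ - δ) = -(2 * φ - δ) by ring]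
  simp only [Complex.cos_neg, Complex.sin_neg]
  module

/-- Exact form of the sandwiched small-rotation operator (Lemma 1):
`P₀ V(φ)ᴴ V(φ−δ) P₀ = [cos((θ/2π)δ)cos δ · I − i sin((θ/2π)δ)cos(2φ−δ) · H] P₀`. -/
theorem sandwiched_rotation_code_block {N : ℕ} (θ : ℝ)
    (P₀ X H : Matrix (Fin N) (Fin N) ℂ)
    (hP_herm : P₀ᴴ = P₀) (hP_idem : P₀ * P₀ = P₀)
    (hX_herm : Xᴴ = X) (hH_herm : Hᴴ = H)
    (hX2 : X * X = 1) (hH2 : H * H = 1)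
    (hXH : X * H = -(H * X))
    (hHP : H * P₀ = P₀ * H)
    (hPXP : P₀ * X * P₀ = 0) (hPXHP : P₀ * (X * H) * P₀ = 0)
    (V : ℝ → Matrix (Fin N) (Fin N) ℂ)
    (hVdef : ∀ φ, V φ =
      NormedSpace.exp ((Complex.I * (θ * φ / (2 * Real.pi))) • H) *
        NormedSpace.exp ((Complex.I * φ) • X)) :
    ∀ φ δ : ℝ, P₀ * (V φ)ᴴ * V (φ - δ) * P₀ =
      ((Real.cos (θ / (2 * Real.pi) * δ) * Real.cos δ : ℝ) : ℂ) • P₀ -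
        (Complex.I * ((Real.sin (θ / (2 * Real.pi) * δ) *
          Real.cos (2 * φ - δ) : ℝ) : ℂ)) • (H * P₀) :=
  sandwiched_rotation_code_block_general θ P₀ X H hP_idem hX_herm hH_herm hX2 hH2 hXH hHP hPXP hPXHP
    V hVdef
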